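/- (Corollary to Theorem 2.) Let Ω ⊆ ℝ³ be a bounded measurable set of finite positive Lebesgue measure vol(Ω) and diameter at most d > 0, and let B : ℝ³ → ℝ³ be an integrable vector field vanishing outside Ω whose fourth power of the norm is integrable on Ω. Let A be the Biot–Savart vector potential of B. Then vol(Ω) · ∫_Ω ‖B(x)‖⁴ dx ≥ d⁻² · ( ∫_Ω ⟨A(x), B(x)⟩ dx )². -/

import Mathlib

/-!
The Biot–Savart kernel gives `‖A(x)‖ ≤ (4π)⁻¹ ∫_Ω ‖B(y)‖ ‖x - y‖⁻² dy`, so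
`|χ_B| ≤ (4π)⁻¹ ∫_Ω ∫_Ω ‖B(x)‖ ‖B(y)‖ ‖x - y‖⁻² dy dx`. The kernel `‖x - y‖⁻²` is symmetric and,
since `Ω` lies in the ball of radius `d` around each of its points, its integral over `Ω` is at
most `∫_{‖z‖ ≤ d} ‖z‖⁻² dz = 4πd` (polar coordinates). Schur's test then yields Arnold's
inequality `|χ_B| ≤ d ∫_Ω ‖B‖²`, and Cauchy–Schwarz `(∫_Ω ‖B‖²)² ≤ vol(Ω) ∫_Ω ‖B‖⁴` finishes.
-/

open MeasureTheory

noncomputable section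

/-- The cross product of two vectors in Euclidean 3-space. -/
def cross3 (u v : EuclideanSpace ℝ (Fin 3)) : EuclideanSpace ℝ (Fin 3) :=
  (WithLp.equiv 2 (Fin 3 → ℝ)).symm
    ![u 1 * v 2 - u 2 * v 1, u 2 * v 0 - u 0 * v 2, u 0 * v 1 - u 1 * v 0]

/-- The Biot–Savart vector potential of a field `B` supported in `Ω`:
`A(x) = (1/(4π)) ∫_Ω B(y) × (x − y)/‖x − y‖³ dy`. -/
def biotSavart (Ω : Set (EuclideanSpace ℝ (Fin 3)))
    (B : EuclideanSpace ℝ (Fin 3) → EuclideanSpace ℝ (Fin 3))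
    (x : EuclideanSpace ℝ (Fin 3)) : EuclideanSpace ℝ (Fin 3) :=
  (1 / (4 * Real.pi)) • ∫ y in Ω, (‖x - y‖ ^ 3)⁻¹ • cross3 (B y) (x - y)

open Set Metric Function Real
open scoped ENNReal

theorem ENNReal.two_mul_le_add_sq (a b : ℝ≥0∞) : 2 * a * b ≤ a ^ 2 + b ^ 2 := by
  rcases eq_or_ne a ⊤ with rfl | ha
  · simp [top_pow two_ne_zero]
  rcases eq_or_ne b ⊤ with rfl | hb
  · simp [top_pow two_ne_zero]
  lift a to NNReal using ha
  lift b to NNReal using hb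
  exact_mod_cast _root_.two_mul_le_add_sq a b

/-- Schur's test for a symmetric kernel, via `2 g(x) g(y) ≤ g(x)² + g(y)²`. -/
theorem lintegral_lintegral_mul_le_of_symmetric {X : Type*} [MeasurableSpace X] {μ : Measure X}
    [SFinite μ] {K : X → X → ℝ≥0∞} (hK : Measurable (uncurry K))
    (hK_symm : ∀ x y, K x y = K y x) {C : ℝ≥0∞} (hC : ∀ᵐ x ∂μ, ∫⁻ y, K x y ∂μ ≤ C)
    {g : X → ℝ≥0∞} (hg : AEMeasurable g μ) :
    ∫⁻ x, ∫⁻ y, g x * g y * K x y ∂μ ∂μ ≤ C * ∫⁻ x, g x ^ 2 ∂μ := by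
  have hK_left (x : X) : Measurable (K x) := hK.comp measurable_prodMk_left
  have hgK : AEMeasurable (fun p : X × X => g p.2 ^ 2 * K p.1 p.2) (μ.prod μ) :=
    (hg.comp_snd.pow_const 2).mul hK.aemeasurable
  set P := ∫⁻ x, ∫⁻ y, g x ^ 2 * K x y ∂μ ∂μ
  have hP : P ≤ C * ∫⁻ x, g x ^ 2 ∂μ := calc
    P = ∫⁻ x, g x ^ 2 * ∫⁻ y, K x y ∂μ ∂μ :=
        lintegral_congr fun x => lintegral_const_mul _ (hK_left x)
    _ ≤ ∫⁻ x, g x ^ 2 * C ∂μ := lintegral_mono_ae (hC.mono fun x hx => by gcongr)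
    _ = C * ∫⁻ x, g x ^ 2 ∂μ := by rw [lintegral_mul_const'' _ (hg.pow_const 2), mul_comm]
  have hswap : ∫⁻ x, ∫⁻ y, g y ^ 2 * K x y ∂μ ∂μ = P := by
    rw [lintegral_lintegral_swap hgK]
    exact lintegral_congr fun y => lintegral_congr fun x => by rw [hK_symm]
  have hsplit : ∫⁻ x, ∫⁻ y, 2 * (g x * g y * K x y) ∂μ ∂μ ≤ 2 * P := calc
    _ ≤ ∫⁻ x, ∫⁻ y, (g x ^ 2 * K x y + g y ^ 2 * K x y) ∂μ ∂μ := by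
        refine lintegral_mono fun x => lintegral_mono fun y => ?_
        rw [← add_mul, ← mul_assoc, ← mul_assoc]
        gcongr
        exact ENNReal.two_mul_le_add_sq _ _
    _ = P + ∫⁻ x, ∫⁻ y, g y ^ 2 * K x y ∂μ ∂μ := by
        rw [← lintegral_add_right' _ hgK.lintegral_prod_right']
        exact lintegral_congr fun x =>
          lintegral_add_right' _ ((hg.pow_const 2).mul (hK_left x).aemeasurable)
    _ = 2 * P := by rw [hswap, two_mul]
  rw [← ENNReal.mul_le_mul_iff_right two_ne_zero ENNReal.ofNat_ne_top,
    ← lintegral_const_mul' _ _ ENNReal.ofNat_ne_top]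
  calc ∫⁻ x, 2 * ∫⁻ y, g x * g y * K x y ∂μ ∂μ
      = ∫⁻ x, ∫⁻ y, 2 * (g x * g y * K x y) ∂μ ∂μ :=
        lintegral_congr fun x => (lintegral_const_mul' _ _ ENNReal.ofNat_ne_top).symm
    _ ≤ 2 * (C * ∫⁻ x, g x ^ 2 ∂μ) := hsplit.trans (by gcongr)

theorem lintegral_fun_norm_addHaar {E : Type*} [NormedAddCommGroup E] [NormedSpace ℝ E]
    [MeasurableSpace E] [BorelSpace E] [FiniteDimensional ℝ E] [Nontrivial E]
    (μ : Measure E) [μ.IsAddHaarMeasure] {f : ℝ → ℝ≥0∞} (hf : Measurable f) :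
    ∫⁻ x, f ‖x‖ ∂μ = Module.finrank ℝ E * μ (ball 0 1) *
      ∫⁻ y in Ioi (0 : ℝ), ENNReal.ofReal (y ^ (Module.finrank ℝ E - 1)) * f y := by
  have hf' : Measurable fun y : Ioi (0 : ℝ) => f y := hf.comp measurable_subtype_coe
  calc ∫⁻ x, f ‖x‖ ∂μ = ∫⁻ x : ({(0 : E)}ᶜ : Set E), f ‖x.1‖ ∂μ.comap (↑) := by
        rw [lintegral_subtype_comap (measurableSet_singleton _).compl fun x => f ‖x‖,
          restrict_compl_singleton]
    _ = ∫⁻ x, f x.2 ∂μ.toSphere.prod (.volumeIoiPow (Module.finrank ℝ E - 1)) := by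
        simpa using μ.measurePreserving_homeomorphUnitSphereProd.lintegral_comp_emb
          (Homeomorph.measurableEmbedding _) (f ∘ Subtype.val ∘ Prod.snd)
    _ = μ.toSphere univ * ∫⁻ y : Ioi (0 : ℝ), f y ∂.volumeIoiPow (Module.finrank ℝ E - 1) := by
        rw [lintegral_prod (fun p : sphere (0 : E) 1 × Ioi (0 : ℝ) => f p.2)
          (hf'.comp measurable_snd).aemeasurable]
        simp [lintegral_const, mul_comm]
    _ = _ := by
        rw [μ.toSphere_apply_univ, Measure.volumeIoiPow,
          lintegral_withDensity_eq_lintegral_mul _ (by fun_prop) hf']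
        exact congrArg _ (lintegral_subtype_comap measurableSet_Ioi
          fun y => ENNReal.ofReal (y ^ (Module.finrank ℝ E - 1)) * f y)

theorem sq_integral_le_measureReal_mul_integral_sq {α : Type*} [MeasurableSpace α]
    {μ : Measure α} [IsFiniteMeasure μ] {f : α → ℝ} (hf : MemLp f 2 μ) :
    (∫ x, f x ∂μ) ^ 2 ≤ μ.real univ * ∫ x, f x ^ 2 ∂μ := by
  have hf1 : Integrable f μ := hf.integrable one_le_two
  have hf2 : Integrable (fun x => f x ^ 2) μ := (memLp_two_iff_integrable_sq hf.1).1 hf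
  have hquad (t : ℝ) :
      0 ≤ μ.real univ * (t * t) + (-2 * ∫ x, f x ∂μ) * t + ∫ x, f x ^ 2 ∂μ := by
    have hexpand : ∫ x, (f x - t) ^ 2 ∂μ
        = ∫ x, f x ^ 2 ∂μ - 2 * t * ∫ x, f x ∂μ + μ.real univ * t ^ 2 := by
      calc ∫ x, (f x - t) ^ 2 ∂μ = ∫ x, (f x ^ 2 - 2 * t * f x + t ^ 2) ∂μ :=
            integral_congr_ae (ae_of_all _ fun x => by ring)
        _ = _ := by
            rw [integral_add ?_ (integrable_const _), integral_sub hf2 (hf1.const_mul _),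
              integral_const_mul, integral_const, smul_eq_mul]
            exact hf2.sub (hf1.const_mul _)
    have hnonneg : 0 ≤ ∫ x, (f x - t) ^ 2 ∂μ := integral_nonneg fun x => sq_nonneg _
    linarith
  have := discrim_le_zero hquad
  rw [discrim] at this
  linarith

theorem memLp_two_sq_norm_of_integrable_pow_four {α E : Type*} [MeasurableSpace α]
    {μ : Measure α} [NormedAddCommGroup E] {f : α → E}
    (hf : Integrable (fun x => ‖f x‖ ^ 4) μ) : MemLp (fun x => ‖f x‖ ^ 2) 2 μ := by
  have hmeas : AEStronglyMeasurable (fun x => ‖f x‖ ^ 2) μ :=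
    hf.aemeasurable.sqrt.aestronglyMeasurable.congr <| ae_of_all _ fun x => by
      dsimp only
      rw [show ‖f x‖ ^ 4 = (‖f x‖ ^ 2) ^ 2 by ring, Real.sqrt_sq (by positivity)]
  refine (memLp_two_iff_integrable_sq hmeas).2 ?_
  simpa [← pow_mul] using hf

local notation "E3" => EuclideanSpace ℝ (Fin 3)

theorem norm_cross3_le (u v : E3) : ‖cross3 u v‖ ≤ ‖u‖ * ‖v‖ := by
  have hnorm (w : E3) : ‖w‖ = √(w 0 ^ 2 + w 1 ^ 2 + w 2 ^ 2) := by
    simp [EuclideanSpace.norm_eq, Fin.sum_univ_three]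
  rw [hnorm, hnorm, hnorm, ← Real.sqrt_mul (by positivity)]
  apply Real.sqrt_le_sqrt
  simp only [cross3, WithLp.equiv_symm_apply, PiLp.toLp_apply, Matrix.cons_val]
  nlinarith [sq_nonneg (u 0 * v 0 + u 1 * v 1 + u 2 * v 2)]

theorem enorm_smul_cross3_le (b z : E3) :
    ‖(‖z‖ ^ 3)⁻¹ • cross3 b z‖ₑ ≤ ‖b‖ₑ * (‖z‖ₑ ^ 2)⁻¹ := by
  rcases eq_or_ne z 0 with rfl | hz
  · simp
  have hz0 : 0 < ‖z‖ := norm_pos_iff.2 hz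
  have hreal : ‖(‖z‖ ^ 3)⁻¹ • cross3 b z‖ ≤ ‖b‖ * (‖z‖ ^ 2)⁻¹ := calc
    _ = (‖z‖ ^ 3)⁻¹ * ‖cross3 b z‖ := by rw [norm_smul, norm_inv, norm_pow, norm_norm]
    _ ≤ (‖z‖ ^ 3)⁻¹ * (‖b‖ * ‖z‖) := by gcongr; exact norm_cross3_le b z
    _ = ‖b‖ * (‖z‖ ^ 2)⁻¹ := by field_simp
  rw [← ofReal_norm, ← ofReal_norm, ← ofReal_norm, ← ENNReal.ofReal_pow (norm_nonneg _),
    ← ENNReal.ofReal_inv_of_pos (by positivity), ← ENNReal.ofReal_mul (norm_nonneg _)]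
  exact ENNReal.ofReal_le_ofReal hreal

theorem lintegral_closedBall_inv_enorm_sq (r : ℝ) :
    ∫⁻ z in closedBall (0 : E3) r, (‖z‖ₑ ^ 2)⁻¹ = ENNReal.ofReal (4 * π * r) := by
  set f : ℝ → ℝ≥0∞ := (Iic r).indicator fun t => (ENNReal.ofReal t ^ 2)⁻¹
  have hf : Measurable f :=
    (by fun_prop : Measurable fun t : ℝ => (ENNReal.ofReal t ^ 2)⁻¹).indicator measurableSet_Iic
  have hradial : ∫⁻ y in Ioi (0 : ℝ), ENNReal.ofReal (y ^ 2) * f y = ENNReal.ofReal r := by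
    rw [setLIntegral_congr_fun measurableSet_Ioi (g := (Iic r).indicator 1) fun y (hy : 0 < y) => ?_,
      lintegral_indicator_one measurableSet_Iic, Measure.restrict_apply measurableSet_Iic,
      Iic_inter_Ioi, Real.volume_Ioc, sub_zero]
    by_cases hyr : y ≤ r
    · simp [f, hyr, ENNReal.ofReal_pow hy.le, ENNReal.mul_inv_cancel, hy]
    · simp [f, hyr]
  have hpolar := lintegral_fun_norm_addHaar (E := E3) volume hf
  rw [finrank_euclideanSpace_fin, hradial, EuclideanSpace.volume_ball_fin_three] at hpolar
  rw [← lintegral_indicator measurableSet_closedBall]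
  convert hpolar using 1
  · congr with z
    simp [f, indicator, ofReal_norm]
  · rw [ENNReal.ofReal_one, one_pow, one_mul, ← ENNReal.ofReal_natCast,
      ← ENNReal.ofReal_mul (by norm_num), ← ENNReal.ofReal_mul (by positivity)]
    ring_nf

theorem lintegral_inv_enorm_sub_sq_le {Ω : Set E3} {x : E3} {r : ℝ} (h : Ω ⊆ closedBall x r) :
    ∫⁻ y in Ω, (‖x - y‖ₑ ^ 2)⁻¹ ≤ ENNReal.ofReal (4 * π * r) := calc
  _ ≤ ∫⁻ y in closedBall x r, (‖x - y‖ₑ ^ 2)⁻¹ := lintegral_mono_set h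
  _ = ∫⁻ z in closedBall (0 : E3) r, (‖z‖ₑ ^ 2)⁻¹ := by
      have hpre : (fun y => x - y) ⁻¹' closedBall 0 r = closedBall x r := by
        ext y
        simp [dist_eq_norm, norm_sub_rev]
      rw [← hpre, (Measure.measurePreserving_sub_left volume x).setLIntegral_comp_preimage
        measurableSet_closedBall (f := fun z : E3 => (‖z‖ₑ ^ 2)⁻¹) (by fun_prop)]
  _ = ENNReal.ofReal (4 * π * r) := lintegral_closedBall_inv_enorm_sq r

theorem ae_lintegral_inv_enorm_sub_sq_le {Ω : Set E3} (hΩb : Bornology.IsBounded Ω) {d : ℝ}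
    (hd : diam Ω ≤ d) :
    ∀ᵐ x ∂volume.restrict Ω, ∫⁻ y in Ω, (‖x - y‖ₑ ^ 2)⁻¹ ≤ ENNReal.ofReal (4 * π * d) := by
  have hclosure : ∀ᵐ x ∂volume.restrict Ω, x ∈ closure Ω :=
    (ae_restrict_iff isClosed_closure.measurableSet).2 (ae_of_all _ fun x hx => subset_closure hx)
  refine hclosure.mono fun x hx => lintegral_inv_enorm_sub_sq_le fun y hy => ?_
  rw [mem_closedBall, ← diam_closure] at *
  exact (dist_le_diam_of_mem hΩb.closure (subset_closure hy) hx).trans hd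

theorem enorm_biotSavart_le (Ω : Set E3) (B : E3 → E3) (x : E3) :
    ‖biotSavart Ω B x‖ₑ ≤ ENNReal.ofReal (4 * π)⁻¹ * ∫⁻ y in Ω, ‖B y‖ₑ * (‖x - y‖ₑ ^ 2)⁻¹ := by
  rw [biotSavart, enorm_smul, one_div, Real.enorm_eq_ofReal (by positivity)]
  gcongr
  exact (enorm_integral_le_lintegral_enorm _).trans
    (lintegral_mono fun y => enorm_smul_cross3_le _ _)

theorem enorm_integral_inner_biotSavart_le {Ω : Set E3} (hΩb : Bornology.IsBounded Ω) {d : ℝ}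
    (hd : diam Ω ≤ d) {B : E3 → E3} (hB : AEMeasurable (fun x => ‖B x‖ₑ) (volume.restrict Ω)) :
    ‖∫ x in Ω, inner ℝ (biotSavart Ω B x) (B x)‖ₑ ≤ ENNReal.ofReal d * ∫⁻ x in Ω, ‖B x‖ₑ ^ 2 := by
  have hK : Measurable (uncurry fun x y : E3 => (‖x - y‖ₑ ^ 2)⁻¹) := by fun_prop
  have hK_symm (x y : E3) : (‖x - y‖ₑ ^ 2)⁻¹ = (‖y - x‖ₑ ^ 2)⁻¹ := by rw [enorm_sub_rev]
  calc _ ≤ ∫⁻ x in Ω, ‖biotSavart Ω B x‖ₑ * ‖B x‖ₑ :=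
        (enorm_integral_le_lintegral_enorm _).trans <| lintegral_mono fun x => by
          simpa [enorm] using ENNReal.coe_le_coe.2 (nnnorm_inner_le_nnnorm (𝕜 := ℝ) _ _)
    _ ≤ ∫⁻ x in Ω, (ENNReal.ofReal (4 * π)⁻¹
          * ∫⁻ y in Ω, ‖B y‖ₑ * (‖x - y‖ₑ ^ 2)⁻¹) * ‖B x‖ₑ :=
        lintegral_mono fun x => by gcongr; exact enorm_biotSavart_le Ω B x
    _ = ENNReal.ofReal (4 * π)⁻¹
          * ∫⁻ x in Ω, ∫⁻ y in Ω, ‖B x‖ₑ * ‖B y‖ₑ * (‖x - y‖ₑ ^ 2)⁻¹ := by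
        rw [← lintegral_const_mul' _ _ ENNReal.ofReal_ne_top]
        refine lintegral_congr fun x => ?_
        rw [mul_assoc, mul_comm _ ‖B x‖ₑ, ← lintegral_const_mul' _ _ enorm_ne_top]
        simp only [mul_assoc]
    _ ≤ ENNReal.ofReal (4 * π)⁻¹ * (ENNReal.ofReal (4 * π * d) * ∫⁻ x in Ω, ‖B x‖ₑ ^ 2) := by
        gcongr
        exact lintegral_lintegral_mul_le_of_symmetric hK hK_symm
          (ae_lintegral_inv_enorm_sub_sq_le hΩb hd) hB
    _ = ENNReal.ofReal d * ∫⁻ x in Ω, ‖B x‖ₑ ^ 2 := by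
        rw [← mul_assoc, ← ENNReal.ofReal_mul (by positivity)]
        congr 2
        field_simp

theorem abs_integral_inner_biotSavart_le {Ω : Set E3} (hΩb : Bornology.IsBounded Ω) {d : ℝ}
    (hd : diam Ω ≤ d) {B : E3 → E3} (hB : IntegrableOn (fun x => ‖B x‖ ^ 2) Ω) :
    |∫ x in Ω, inner ℝ (biotSavart Ω B x) (B x)| ≤ d * ∫ x in Ω, ‖B x‖ ^ 2 := by
  have hd0 : 0 ≤ d := diam_nonneg.trans hd
  have hB_meas : AEMeasurable (fun x => ‖B x‖ₑ) (volume.restrict Ω) :=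
    hB.aemeasurable.sqrt.ennreal_ofReal.congr <| ae_of_all _ fun x => by
      simp [Real.sqrt_sq (norm_nonneg _), ofReal_norm]
  have hB_lint : ∫⁻ x in Ω, ‖B x‖ₑ ^ 2 = ENNReal.ofReal (∫ x in Ω, ‖B x‖ ^ 2) := by
    rw [ofReal_integral_eq_lintegral_ofReal hB (ae_of_all _ fun x => by positivity)]
    simp [ENNReal.ofReal_pow, ofReal_norm]
  have h := enorm_integral_inner_biotSavart_le hΩb hd hB_meas
  rw [hB_lint, ← ENNReal.ofReal_mul hd0, ← ofReal_norm, Real.norm_eq_abs] at h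
  exact (ENNReal.ofReal_le_ofReal_iff (by positivity)).1 h

theorem generalized_arnold_corollary_general (Ω : Set (EuclideanSpace ℝ (Fin 3)))
    (hΩb : Bornology.IsBounded Ω)
    (hΩfin : volume Ω ≠ ⊤)
    (d : ℝ) (hd : Metric.diam Ω ≤ d)
    (B : EuclideanSpace ℝ (Fin 3) → EuclideanSpace ℝ (Fin 3))
    (hB4 : IntegrableOn (fun x => ‖B x‖ ^ 4) Ω) :
    (volume Ω).toReal * ∫ x in Ω, ‖B x‖ ^ 4 ≥
      (d ^ 2)⁻¹ * (∫ x in Ω, (inner ℝ (biotSavart Ω B x) (B x) : ℝ)) ^ 2 := by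
  have : IsFiniteMeasure (volume.restrict Ω) := isFiniteMeasure_restrict.2 hΩfin
  have hB2 := memLp_two_sq_norm_of_integrable_pow_four hB4
  have harnold := abs_integral_inner_biotSavart_le hΩb hd (hB2.integrable one_le_two)
  have hcs := sq_integral_le_measureReal_mul_integral_sq hB2
  simp only [measureReal_restrict_apply_univ, ← pow_mul] at hcs
  set χ := ∫ x in Ω, (inner ℝ (biotSavart Ω B x) (B x) : ℝ)
  set I2 := ∫ x in Ω, ‖B x‖ ^ 2
  set I4 := ∫ x in Ω, ‖B x‖ ^ 4
  have hI4 : 0 ≤ I4 := integral_nonneg fun x => by positivity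
  have hvI4 : 0 ≤ (volume Ω).toReal * I4 := by positivity
  calc (d ^ 2)⁻¹ * χ ^ 2 ≤ (d ^ 2)⁻¹ * (d ^ 2 * ((volume Ω).toReal * I4)) := by
        gcongr
        calc χ ^ 2 = |χ| ^ 2 := (sq_abs χ).symm
          _ ≤ (d * I2) ^ 2 := by gcongr
          _ = d ^ 2 * I2 ^ 2 := mul_pow d I2 2
          _ ≤ d ^ 2 * ((volume Ω).toReal * I4) := by gcongr; exact hcs
    _ ≤ (volume Ω).toReal * I4 := by
        rcases eq_or_ne d 0 with rfl | hd0
        · simpa using hvI4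
        · rw [inv_mul_cancel_left₀ (pow_ne_zero 2 hd0)]

/-- Corollary to the generalized Arnold inequality:
`vol(Ω) · U⁽⁴⁾(B) ≥ d⁻² · χ_B²`. -/
theorem generalized_arnold_corollary (Ω : Set (EuclideanSpace ℝ (Fin 3)))
    (hΩ : MeasurableSet Ω) (hΩb : Bornology.IsBounded Ω)
    (hΩfin : volume Ω ≠ ⊤) (hΩpos : 0 < volume Ω)
    (d : ℝ) (hd0 : 0 < d) (hd : Metric.diam Ω ≤ d)
    (B : EuclideanSpace ℝ (Fin 3) → EuclideanSpace ℝ (Fin 3))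
    (hB : Integrable B) (hB0 : ∀ x ∉ Ω, B x = 0)
    (hB4 : IntegrableOn (fun x => ‖B x‖ ^ 4) Ω) :
    (volume Ω).toReal * ∫ x in Ω, ‖B x‖ ^ 4 ≥
      (d ^ 2)⁻¹ * (∫ x in Ω, (inner ℝ (biotSavart Ω B x) (B x) : ℝ)) ^ 2 :=
  generalized_arnold_corollary_general Ω hΩb hΩfin d hd B hB4

end
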